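/- arXiv:1412.0163 — 2 statements merged into one kernel-verified Lean document; each statement's English description precedes it below -/
import Mathlib

section
/- Duality of multiple q-zeta brackets: for positive integers s_1,…,s_l, r_1,…,r_l and 0 < q < 1, the series Z(s;r) := c Σ_{m_1,…,m_l>0; d_1,…,d_l>0} ∏_j m_j^{r_j-1} d_j^{s_j-1} · q^{Σ_{i=1}^l d_i(m_i+m_{i+1}+⋯+m_l)}, with c = 1/∏_j (r_j-1)!(s_j-1)!, satisfies Z(s_1,…,s_l; r_1,…,r_l) = Z(r_l,…,r_1; s_l,…,s_1). -/
open scoped Nat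

/-- The multiple q-zeta bracket `Z(s₁,…,s_l; r₁,…,r_l)`. -/
noncomputable def qZetaBracket (l : ℕ) (s r : Fin l → ℕ) (q : ℝ) : ℝ :=
  (∏ j : Fin l, (((r j - 1)! : ℝ) * ((s j - 1)! : ℝ)))⁻¹ *
    ∑' md : (Fin l → ℕ+) × (Fin l → ℕ+),
      (∏ j : Fin l, ((md.1 j : ℕ) : ℝ) ^ (r j - 1) * ((md.2 j : ℕ) : ℝ) ^ (s j - 1)) *
        q ^ (∑ i : Fin l, (md.2 i : ℕ) * ∑ j ∈ Finset.Ici i, (md.1 j : ℕ))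

lemma rev_bij {l : ℕ} : Function.Bijective (Fin.rev : Fin l → Fin l) :=
  Fin.rev_involutive.bijective

lemma sum_Ici_rev {l : ℕ} (d : Fin l → ℕ) (i : Fin l) :
    ∑ j ∈ Finset.Ici i, d j.rev = ∑ j ∈ Finset.Iic i.rev, d j := by
  refine Finset.sum_nbij' (fun j => j.rev) (fun j => j.rev) ?_ ?_ ?_ ?_ ?_ <;>
    simp [Fin.rev_le_rev, Fin.le_rev_iff, Fin.rev_rev]

lemma exp_symm {l : ℕ} (m d : Fin l → ℕ) :
    ∑ i : Fin l, d i * ∑ j ∈ Finset.Ici i, m j =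
      ∑ i : Fin l, m i * ∑ j ∈ Finset.Iic i, d j := by
  simp only [Finset.mul_sum]
  rw [Finset.sum_comm' (t' := Finset.univ) (s' := fun j => Finset.Iic j)
    (by intro i j; simp)]
  simp [Finset.sum_mul, mul_comm]

lemma exp_rev {l : ℕ} (m d : Fin l → ℕ) :
    ∑ i : Fin l, d i * ∑ j ∈ Finset.Ici i, m j =
      ∑ i : Fin l, m i.rev * ∑ j ∈ Finset.Ici i, d j.rev := by
  rw [exp_symm, ← rev_bij.sum_comp (fun i => m i * ∑ j ∈ Finset.Iic i, d j)]
  exact Finset.sum_congr rfl fun i _ => by rw [sum_Ici_rev]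

/-- Duality of multiple q-zeta brackets:
`Z(s₁,…,s_l; r₁,…,r_l) = Z(r_l,…,r₁; s_l,…,s₁)`. -/
theorem qZetaBracket_duality (l : ℕ) (s r : Fin l → ℕ)
    (hs : ∀ j, 1 ≤ s j) (hr : ∀ j, 1 ≤ r j) (q : ℝ) (h0 : 0 < q) (h1 : q < 1) :
    qZetaBracket l s r q = qZetaBracket l (fun i => r i.rev) (fun i => s i.rev) q := by
  unfold qZetaBracket
  have hc : (∏ j : Fin l, (((r j - 1)! : ℝ) * ((s j - 1)! : ℝ))) =
      ∏ j : Fin l, (((s j.rev - 1)! : ℝ) * ((r j.rev - 1)! : ℝ)) := by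
    rw [← rev_bij.prod_comp (fun j => ((r j - 1)! : ℝ) * ((s j - 1)! : ℝ))]
    exact Finset.prod_congr rfl fun j _ => mul_comm _ _
  rw [hc]
  congr 1
  -- the bijection (m, d) ↦ (d ∘ rev, m ∘ rev)
  let e : (Fin l → ℕ+) × (Fin l → ℕ+) ≃ (Fin l → ℕ+) × (Fin l → ℕ+) :=
    { toFun := fun md => (fun j => md.2 j.rev, fun j => md.1 j.rev)
      invFun := fun md => (fun j => md.2 j.rev, fun j => md.1 j.rev)
      left_inv := by intro md; simp [Fin.rev_rev]
      right_inv := by intro md; simp [Fin.rev_rev] }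
  rw [← e.tsum_eq]
  refine tsum_congr fun md => ?_
  simp only [e, Equiv.coe_fn_mk]
  congr 1
  · rw [← rev_bij.prod_comp
      (fun j => ((md.1 j : ℕ) : ℝ) ^ (s j.rev - 1) * ((md.2 j : ℕ) : ℝ) ^ (r j.rev - 1))]
    exact Finset.prod_congr rfl fun j _ => by rw [Fin.rev_rev, mul_comm]
  · congr 1
    exact (exp_rev (fun j => (md.1 j : ℕ)) (fun j => (md.2 j : ℕ))).symm
end

section
/- Stuffle identity for Eulerian kernels: for positive integers s_1, s_2, r_1, r_2, 0<q<1 and n ≥ 1, the product [n^{r_1-1}P_{s_1-1}(q^n)/((s_1-1)!(r_1-1)!(1-q^n)^{s_1})]·[n^{r_2-1}P_{s_2-1}(q^n)/((s_2-1)!(r_2-1)!(1-q^n)^{s_2})] equals C(r_1+r_2-2, r_1-1)·(n^{r_1+r_2-2}/(r_1+r_2-2)!)·[ P_{s_1+s_2-1}(q^n)/((s_1+s_2-1)!(1-q^n)^{s_1+s_2}) + Σ_{j=1}^{s_1} (−1)^{s_2-1} C(s_1+s_2−j−1, s_1−j) λ_{s_1+s_2−j} P_{j-1}(q^n)/((j-1)!(1-q^n)^j)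 + Σ_{j=1}^{s_2} (−1)^{s_1-1} C(s_1+s_2−j−1, s_2−j) λ_{s_1+s_2−j} P_{j-1}(q^n)/((j-1)!(1-q^n)^j) ], where λ_s are defined by −x/(1−e^x) = Σ λ_s x^s. -/
open scoped Nat

open Finset

/-!
Put `E_s(t) = ∑_{d ≥ 1} d^(s-1) t^d / (s-1)!`, which is `P_{s-1}(t) / ((s-1)! (1-t)^s)`. The powers
of `n` factor as `C(r₁+r₂-2, r₁-1) n^(r₁+r₂-2) / (r₁+r₂-2)! = n^(r₁-1)/(r₁-1)! · n^(r₂-1)/(r₂-1)!`,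
so the claim is an identity of power series `E_a E_b = ∑_m R_{a,b}(m) t^m`, where
`R_{a,b}(m) = stuffleCoeff a b m` is a polynomial in `m` with Bernoulli coefficients. The
coefficient of `t^m` in `E_a E_b` is the convolution `∑_{k+l=m} k^(a-1) l^(b-1) / ((a-1)! (b-1)!)`.
Both families satisfy `a R_{a+1,b} = m R_{a,b} - b R_{a,b+1}` (the convolution because `k + l = m`),
so they agree as soon as they agree for `a = 1`. There the convolution is a sum of powers and the
identity is Faulhaber's formula, up to a constant that vanishes because `B_b = 0` for odd `b > 1`
and `B_1 = -1/2`.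
-/

lemma eq_of_succ_left_recurrence {K : Type*} [Field K] [CharZero K] {F G : ℕ → ℕ → K} (x : K)
    (hF : ∀ a b, a ≠ 0 → b ≠ 0 → a * F (a + 1) b = x * F a b - b * F a (b + 1))
    (hG : ∀ a b, a ≠ 0 → b ≠ 0 → a * G (a + 1) b = x * G a b - b * G a (b + 1))
    (h1 : ∀ b, b ≠ 0 → F 1 b = G 1 b) {a b : ℕ} (ha : a ≠ 0) (hb : b ≠ 0) :
    F a b = G a b := by
  obtain ⟨a, rfl⟩ : ∃ a', a = a' + 1 := ⟨a - 1, by omega⟩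
  clear ha
  induction a generalizing b with
  | zero => exact h1 b hb
  | succ a ih =>
    refine mul_left_cancel₀ (Nat.cast_ne_zero.2 a.succ_ne_zero) ?_
    rw [hF _ _ a.succ_ne_zero hb, hG _ _ a.succ_ne_zero hb, ih hb, ih b.succ_ne_zero]

lemma add_choose_mul_pow_div_factorial {K : Type*} [Field K] [CharZero K] (i j : ℕ) (x : K) :
    ((i + j).choose i : K) * (x ^ (i + j) / (i + j)!) = x ^ i / i ! * (x ^ j / j !) := by
  have : ((i + j)! : K) ≠ 0 := Nat.cast_ne_zero.2 (Nat.factorial_ne_zero _)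
  rw [Nat.cast_add_choose, pow_add]
  field_simp

/-- `λ_s`: Mathlib's convention `B₁ = -1/2` makes these the coefficients of `-x / (1 - e^x)`. -/
def bernoulliCoeff (s : ℕ) : ℚ := bernoulli s / s !

def eulerCoeff (s : ℕ) (x : ℚ) : ℚ := x ^ (s - 1) / (s - 1)!

def stuffleTail (a b : ℕ) (x : ℚ) : ℚ :=
  ∑ j ∈ Icc 1 a,
    ((a + b - j - 1).choose (a - j) : ℚ) * bernoulliCoeff (a + b - j) * eulerCoeff j x

def stuffleCoeff (a b : ℕ) (x : ℚ) : ℚ :=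
  eulerCoeff (a + b) x + (-1) ^ (b - 1) * stuffleTail a b x + (-1) ^ (a - 1) * stuffleTail b a x

lemma bernoulliCoeff_zero : bernoulliCoeff 0 = 1 := by simp [bernoulliCoeff]

lemma eulerCoeff_one (x : ℚ) : eulerCoeff 1 x = 1 := by simp [eulerCoeff]

lemma mul_eulerCoeff_succ {s : ℕ} (hs : s ≠ 0) (x : ℚ) :
    s * eulerCoeff (s + 1) x = x * eulerCoeff s x := by
  obtain ⟨s, rfl⟩ := Nat.exists_eq_succ_of_ne_zero hs
  simp only [eulerCoeff, Nat.succ_sub_one, Nat.factorial_succ]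
  push_cast
  field_simp
  ring

lemma stuffleTail_eq_sum_range (a b : ℕ) (x : ℚ) :
    stuffleTail a b x = ∑ i ∈ range a,
      ((a + b - 2 - i).choose (a - 1 - i) : ℚ) * bernoulliCoeff (a + b - 1 - i) *
        eulerCoeff (i + 1) x := by
  rw [stuffleTail, ← Ico_add_one_right_eq_Icc, sum_Ico_eq_sum_range, Nat.add_sub_cancel]
  refine sum_congr rfl fun i _ => ?_
  rw [show a + b - (1 + i) - 1 = a + b - 2 - i by omega, show a - (1 + i) = a - 1 - i by omega,
    show a + b - (1 + i) = a + b - 1 - i by omega, add_comm 1 i]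

lemma stuffleTail_succ_left (a b : ℕ) (x : ℚ) :
    a * stuffleTail (a + 1) b x = x * stuffleTail a b x + b * stuffleTail a (b + 1) x := by
  have hshift : x * stuffleTail a b x = ∑ i ∈ range (a + 1),
      (i : ℚ) * (a + b - 1 - i).choose (a - i) * bernoulliCoeff (a + b - i) *
        eulerCoeff (i + 1) x := by
    rw [sum_range_succ', stuffleTail_eq_sum_range, mul_sum]
    simp only [Nat.cast_zero, zero_mul, add_zero]
    refine sum_congr rfl fun i hi => ?_
    have hi : i < a := mem_range.1 hi
    rw [show a + b - 1 - (i + 1) = a + b - 2 - i by omega, show a - (i + 1) = a - 1 - i by omega,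
      show a + b - (i + 1) = a + b - 1 - i by omega]
    linear_combination
      (((a + b - 2 - i).choose (a - 1 - i) : ℚ) * bernoulliCoeff (a + b - 1 - i)) *
        (mul_eulerCoeff_succ i.succ_ne_zero x).symm
  have hpascal : ∀ i ∈ range a, (a : ℚ) * (a + b - 1 - i).choose (a - i) =
      i * (a + b - 1 - i).choose (a - i) + b * (a + b - 1 - i).choose (a - 1 - i) := by
    intro i hi
    have hi : i < a := mem_range.1 hi
    have h := Nat.choose_succ_right_eq (a + b - 1 - i) (a - 1 - i)
    rw [show a - 1 - i + 1 = a - i by omega, show a + b - 1 - i - (a - 1 - i) = b by omega] at h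
    have h' : ((_ : ℕ) : ℚ) = _ := congrArg Nat.cast h
    push_cast [Nat.cast_sub hi.le] at h'
    linear_combination h'
  rw [hshift]
  simp only [stuffleTail_eq_sum_range]
  rw [sum_range_succ, sum_range_succ, mul_add, mul_sum, mul_sum, add_right_comm (∑ i ∈ range a, _),
    ← sum_add_distrib]
  congr 1
  · refine sum_congr rfl fun i hi => ?_
    rw [show a + 1 + b - 2 - i = a + b - 1 - i by omega, show a + 1 - 1 - i = a - i by omega,
      show a + 1 + b - 1 - i = a + b - i by omega,
      show a + (b + 1) - 2 - i = a + b - 1 - i by omega,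
      show a + (b + 1) - 1 - i = a + b - i by omega]
    linear_combination (bernoulliCoeff (a + b - i) * eulerCoeff (i + 1) x) * hpascal i hi
  · simp only [Nat.sub_self, Nat.add_sub_cancel, Nat.add_sub_cancel_left,
      show a + 1 + b - 2 - a = b - 1 by omega, show a + 1 + b - 1 - a = b by omega,
      show a + b - 1 - a = b - 1 by omega]
    ring

lemma stuffleCoeff_succ_left {a b : ℕ} (ha : a ≠ 0) (hb : b ≠ 0) (x : ℚ) :
    a * stuffleCoeff (a + 1) b x = x * stuffleCoeff a b x - b * stuffleCoeff a (b + 1) x := by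
  obtain ⟨a, rfl⟩ : ∃ a', a = a' + 1 := ⟨a - 1, by omega⟩
  obtain ⟨b, rfl⟩ : ∃ b', b = b' + 1 := ⟨b - 1, by omega⟩
  have hab := mul_eulerCoeff_succ (a + b + 1).succ_ne_zero x
  have hT := stuffleTail_succ_left (a + 1) (b + 1) x
  have hT' := stuffleTail_succ_left (b + 1) (a + 1) x
  simp only [stuffleCoeff, Nat.add_sub_cancel, pow_succ,
    show a + 1 + 1 + (b + 1) = a + b + 1 + 1 + 1 by omega,
    show a + 1 + (b + 1) = a + b + 1 + 1 by omega,
    show a + 1 + (b + 1 + 1) = a + b + 1 + 1 + 1 by omega]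
  push_cast at hab hT hT' ⊢
  linear_combination hab + (-1) ^ b * hT + (-1) ^ a * hT'

lemma sum_range_eulerCoeff (p m : ℕ) :
    ∑ k ∈ range m, eulerCoeff (p + 1) k =
      ∑ i ∈ range (p + 1), bernoulliCoeff i * eulerCoeff (p + 2 - i) m := by
  simp only [eulerCoeff, Nat.add_sub_cancel]
  rw [← sum_div, sum_range_pow, sum_div]
  refine sum_congr rfl fun i hi => ?_
  have hi : i ≤ p + 1 := by have := mem_range.1 hi; omega
  rw [show p + 2 - i - 1 = p + 1 - i by omega, bernoulliCoeff, Nat.cast_choose ℚ hi,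
    Nat.factorial_succ]
  push_cast
  field_simp

lemma eulerCoeff_add_stuffleTail_one_right (b : ℕ) (x : ℚ) :
    eulerCoeff (b + 1) x + stuffleTail b 1 x =
      ∑ i ∈ range (b + 1), bernoulliCoeff i * eulerCoeff (b + 1 - i) x := by
  rw [sum_range_succ', ← sum_range_reflect, stuffleTail_eq_sum_range, bernoulliCoeff_zero, one_mul,
    add_comm]
  refine congrArg (· + _) (sum_congr rfl fun i hi => ?_)
  have hi := mem_range.1 hi
  rw [show b + 1 - 2 - i = b - 1 - i by omega, Nat.choose_self, Nat.cast_one, one_mul,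
    show b - 1 - i + 1 = b - i by omega, show b + 1 - (b - i) = i + 1 by omega,
    show b + 1 - 1 - i = b - i by omega]

lemma one_add_neg_one_pow_mul_bernoulliCoeff {b : ℕ} (hb : b ≠ 0) :
    (1 + (-1) ^ (b - 1)) * bernoulliCoeff b = -eulerCoeff b 0 := by
  obtain rfl | hb1 := eq_or_ne b 1
  · norm_num [bernoulliCoeff, eulerCoeff, bernoulli_one]
  have he : eulerCoeff b 0 = 0 := by simp [eulerCoeff, show b - 1 ≠ 0 by omega]
  rcases Nat.even_or_odd b with hev | hodd
  · rw [(Nat.Even.sub_odd (by omega) hev odd_one).neg_one_pow, he]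
    ring
  · rw [bernoulliCoeff, bernoulli_eq_zero_of_odd hodd (by omega), he]
    ring

lemma stuffleCoeff_one_left {b : ℕ} (hb : b ≠ 0) (m : ℕ) :
    stuffleCoeff 1 b (m + 1) = ∑ k ∈ range m, eulerCoeff b (k + 1) := by
  obtain ⟨p, rfl⟩ : ∃ p, b = p + 1 := ⟨b - 1, by omega⟩
  have hfaulhaber := sum_range_eulerCoeff p (m + 1)
  rw [sum_range_succ'] at hfaulhaber
  push_cast at hfaulhaber
  have htail := eulerCoeff_add_stuffleTail_one_right (p + 1) ((m : ℚ) + 1)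
  rw [sum_range_succ, Nat.add_sub_cancel_left, eulerCoeff_one] at htail
  have hT : stuffleTail 1 (p + 1) ((m : ℚ) + 1) = bernoulliCoeff (p + 1) := by
    simp [stuffleTail_eq_sum_range, eulerCoeff_one]
  rw [stuffleCoeff, hT, add_comm 1 (p + 1), Nat.sub_self, pow_zero, one_mul]
  linear_combination htail - hfaulhaber + one_add_neg_one_pow_mul_bernoulliCoeff hb

lemma stuffleCoeff_at_one {a b : ℕ} (ha : a ≠ 0) (hb : b ≠ 0) : stuffleCoeff a b 1 = 0 := by
  refine eq_of_succ_left_recurrence (F := fun a b => stuffleCoeff a b 1) (G := 0) 1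
    (fun a b ha hb => stuffleCoeff_succ_left ha hb 1) (by simp) (fun b hb => ?_) ha hb
  simpa using stuffleCoeff_one_left hb 0

lemma sum_antidiagonal_eulerCoeff_mul {a b : ℕ} (ha : a ≠ 0) (hb : b ≠ 0) (N : ℕ) :
    ∑ kl ∈ antidiagonal N, eulerCoeff a (kl.1 + 1) * eulerCoeff b (kl.2 + 1) =
      stuffleCoeff a b (N + 2) := by
  refine eq_of_succ_left_recurrence
    (F := fun a b => ∑ kl ∈ antidiagonal N, eulerCoeff a (kl.1 + 1) * eulerCoeff b (kl.2 + 1))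
    (G := fun a b => stuffleCoeff a b (N + 2)) ((N : ℚ) + 2) (fun a b ha hb => ?_)
    (fun a b ha hb => stuffleCoeff_succ_left ha hb _) (fun b hb => ?_) ha hb
  · -- `(k + 1) + (l + 1) = N + 2` turns `mul_eulerCoeff_succ` into the recurrence of `stuffleCoeff`
    rw [mul_sum, mul_sum, mul_sum, ← sum_sub_distrib]
    refine sum_congr rfl fun kl hkl => ?_
    have hN : (kl.1 : ℚ) + kl.2 = N := by exact_mod_cast mem_antidiagonal.1 hkl
    linear_combination eulerCoeff b (kl.2 + 1) * mul_eulerCoeff_succ ha (kl.1 + 1)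
      + eulerCoeff a (kl.1 + 1) * mul_eulerCoeff_succ hb (kl.2 + 1)
      + eulerCoeff a (kl.1 + 1) * eulerCoeff b (kl.2 + 1) * hN
  · rw [show (N : ℚ) + 2 = ((N + 1 : ℕ) : ℚ) + 1 by push_cast; ring, stuffleCoeff_one_left hb,
      Nat.sum_antidiagonal_eq_sum_range_succ
        (fun k l => eulerCoeff 1 (k + 1) * eulerCoeff b (l + 1)),
      ← sum_range_reflect (fun k : ℕ => eulerCoeff b (k + 1))]
    simp [eulerCoeff_one]

noncomputable def eulerSeries (s : ℕ) (t : ℝ) : ℝ :=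
  ∑' d : ℕ, (eulerCoeff s (d + 1) : ℝ) * t ^ (d + 1)

lemma eulerSeries_eq_tsum_div (s : ℕ) (t : ℝ) :
    eulerSeries s t = (∑' d : ℕ, ((d + 1 : ℕ) : ℝ) ^ (s - 1) * t ^ (d + 1)) / (s - 1)! := by
  rw [eulerSeries, ← tsum_div_const]
  refine tsum_congr fun d => ?_
  push_cast [eulerCoeff]
  ring

lemma summable_norm_eulerCoeff_mul_pow (s : ℕ) {t : ℝ} (ht : |t| < 1) :
    Summable fun d : ℕ => ‖(eulerCoeff s (d + 1) : ℝ) * t ^ (d + 1)‖ := by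
  have h := (summable_nat_add_iff 1).2
    (summable_pow_mul_geometric_of_norm_lt_one (s - 1) (r := |t|) (by simpa using ht))
  refine (h.div_const ((s - 1)! : ℝ)).congr fun d => ?_
  simp only [eulerCoeff, norm_mul, norm_pow, Real.norm_eq_abs]
  push_cast
  rw [abs_div, abs_pow, abs_of_nonneg (by positivity : (0 : ℝ) ≤ d + 1), Nat.abs_cast]
  ring

lemma hasSum_eulerSeries (s : ℕ) {t : ℝ} (ht : |t| < 1) :
    HasSum (fun d : ℕ => (eulerCoeff s (d + 1) : ℝ) * t ^ (d + 1)) (eulerSeries s t) :=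
  (summable_norm_eulerCoeff_mul_pow s ht).of_norm.hasSum

lemma hasSum_stuffleTail (a b : ℕ) {t : ℝ} (ht : |t| < 1) :
    HasSum (fun d : ℕ => (stuffleTail a b (d + 1) : ℝ) * t ^ (d + 1))
      (∑ j ∈ Icc 1 a, ((a + b - j - 1).choose (a - j) : ℝ) * (bernoulliCoeff (a + b - j) : ℝ) *
        eulerSeries j t) := by
  push_cast [stuffleTail, sum_mul]
  exact hasSum_sum fun j _ => ((hasSum_eulerSeries j ht).mul_left _).congr_fun fun d => by ring

lemma hasSum_stuffleCoeff (a b : ℕ) {t : ℝ} (ht : |t| < 1) :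
    HasSum (fun d : ℕ => (stuffleCoeff a b (d + 1) : ℝ) * t ^ (d + 1))
      (eulerSeries (a + b) t +
        ∑ j ∈ Icc 1 a, (-1) ^ (b - 1) * ((a + b - j - 1).choose (a - j) : ℝ) *
          (bernoulliCoeff (a + b - j) : ℝ) * eulerSeries j t +
        ∑ j ∈ Icc 1 b, (-1) ^ (a - 1) * ((a + b - j - 1).choose (b - j) : ℝ) *
          (bernoulliCoeff (a + b - j) : ℝ) * eulerSeries j t) := by
  have hab := hasSum_stuffleTail a b ht
  have hba := hasSum_stuffleTail b a ht
  rw [add_comm b a] at hba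
  simp only [mul_assoc, ← mul_sum] at hab hba ⊢
  push_cast [stuffleCoeff, add_mul, mul_assoc]
  exact ((hasSum_eulerSeries _ ht).add (hab.mul_left _)).add (hba.mul_left _)

lemma eulerSeries_mul_eq_tsum_stuffleCoeff {a b : ℕ} (ha : a ≠ 0) (hb : b ≠ 0) {t : ℝ}
    (ht : |t| < 1) :
    eulerSeries a t * eulerSeries b t =
      ∑' d : ℕ, (stuffleCoeff a b (d + 1) : ℝ) * t ^ (d + 1) := by
  rw [eulerSeries, eulerSeries, tsum_mul_tsum_eq_tsum_sum_antidiagonal_of_summable_norm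
      (summable_norm_eulerCoeff_mul_pow a ht) (summable_norm_eulerCoeff_mul_pow b ht),
    (hasSum_stuffleCoeff a b ht).summable.tsum_eq_zero_add]
  simp only [Nat.cast_zero, zero_add, stuffleCoeff_at_one ha hb, Rat.cast_zero, zero_mul]
  refine tsum_congr fun N => ?_
  rw [show ((N + 1 : ℕ) : ℚ) + 1 = N + 2 by push_cast; ring,
    ← sum_antidiagonal_eulerCoeff_mul ha hb N]
  push_cast [sum_mul]
  refine sum_congr rfl fun kl hkl => ?_
  rw [← mem_antidiagonal.1 hkl]
  ring

theorem eulerSeries_mul_eulerSeries {a b : ℕ} (ha : a ≠ 0) (hb : b ≠ 0) {t : ℝ} (ht : |t| < 1) :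
    eulerSeries a t * eulerSeries b t =
      eulerSeries (a + b) t +
        ∑ j ∈ Icc 1 a, (-1) ^ (b - 1) * ((a + b - j - 1).choose (a - j) : ℝ) *
          (bernoulliCoeff (a + b - j) : ℝ) * eulerSeries j t +
        ∑ j ∈ Icc 1 b, (-1) ^ (a - 1) * ((a + b - j - 1).choose (b - j) : ℝ) *
          (bernoulliCoeff (a + b - j) : ℝ) * eulerSeries j t :=
  (eulerSeries_mul_eq_tsum_stuffleCoeff ha hb ht).trans (hasSum_stuffleCoeff a b ht).tsum_eq

theorem eulerian_stuffle_general (P : ℕ → Polynomial ℝ)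
    (hP : ∀ s : ℕ, 1 ≤ s → ∀ t : ℝ, |t| < 1 →
      ∑' d : ℕ, ((d + 1 : ℕ) : ℝ) ^ (s - 1) * t ^ (d + 1) = (P (s - 1)).eval t / (1 - t) ^ s)
    (lam : ℕ → ℚ) (hlam : ∀ s : ℕ, 1 ≤ s → lam s = bernoulli s / (s ! : ℚ))
    (s1 s2 r1 r2 : ℕ) (hs1 : 1 ≤ s1) (hs2 : 1 ≤ s2) (hr1 : 1 ≤ r1) (hr2 : 1 ≤ r2)
    (q : ℝ) (h0 : 0 < q) (h1 : q < 1) (n : ℕ) (hn : 1 ≤ n) :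
    ((n : ℝ) ^ (r1 - 1) * (P (s1 - 1)).eval (q ^ n) /
        (((s1 - 1)! : ℝ) * ((r1 - 1)! : ℝ) * (1 - q ^ n) ^ s1)) *
      ((n : ℝ) ^ (r2 - 1) * (P (s2 - 1)).eval (q ^ n) /
        (((s2 - 1)! : ℝ) * ((r2 - 1)! : ℝ) * (1 - q ^ n) ^ s2)) =
    (Nat.choose (r1 + r2 - 2) (r1 - 1) : ℝ) *
      ((n : ℝ) ^ (r1 + r2 - 2) / ((r1 + r2 - 2)! : ℝ)) *
      ((P (s1 + s2 - 1)).eval (q ^ n) / (((s1 + s2 - 1)! : ℝ) * (1 - q ^ n) ^ (s1 + s2)) +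
        (∑ j ∈ Finset.Icc 1 s1,
          (-1 : ℝ) ^ (s2 - 1) * (Nat.choose (s1 + s2 - j - 1) (s1 - j) : ℝ) *
            ((lam (s1 + s2 - j) : ℝ)) *
            ((P (j - 1)).eval (q ^ n) / (((j - 1)! : ℝ) * (1 - q ^ n) ^ j))) +
        ∑ j ∈ Finset.Icc 1 s2,
          (-1 : ℝ) ^ (s1 - 1) * (Nat.choose (s1 + s2 - j - 1) (s2 - j) : ℝ) *
            ((lam (s1 + s2 - j) : ℝ)) *
            ((P (j - 1)).eval (q ^ n) / (((j - 1)! : ℝ) * (1 - q ^ n) ^ j))) := by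
  set t := q ^ n
  have ht : |t| < 1 := by rw [abs_of_pos (pow_pos h0 n)]; exact pow_lt_one₀ h0.le h1 (by omega)
  have hE : ∀ s, 1 ≤ s →
      (P (s - 1)).eval t / (((s - 1)! : ℝ) * (1 - t) ^ s) = eulerSeries s t := fun s hs => by
    rw [eulerSeries_eq_tsum_div, hP s hs t ht, div_div, mul_comm]
  have hsum : ∀ S ⊆ Icc 1 s1 ∪ Icc 1 s2, ∀ (c : ℝ) (w : ℕ → ℝ),
      ∑ j ∈ S, c * w j * (lam (s1 + s2 - j) : ℝ) *
          ((P (j - 1)).eval t / (((j - 1)! : ℝ) * (1 - t) ^ j)) =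
        ∑ j ∈ S, c * w j * (bernoulliCoeff (s1 + s2 - j) : ℝ) * eulerSeries j t := by
    refine fun S hS c w => sum_congr rfl fun j hj => ?_
    have hj := mem_union.1 (hS hj)
    simp only [mem_Icc] at hj
    rw [hE j (by omega), hlam _ (by omega), bernoulliCoeff]
  obtain ⟨i, rfl⟩ : ∃ i, r1 = i + 1 := ⟨r1 - 1, by omega⟩
  obtain ⟨k, rfl⟩ : ∃ k, r2 = k + 1 := ⟨r2 - 1, by omega⟩
  simp only [Nat.add_sub_cancel, show i + 1 + (k + 1) - 2 = i + k by omega]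
  rw [hsum _ subset_union_left, hsum _ subset_union_right, hE (s1 + s2) (by omega),
    ← eulerSeries_mul_eulerSeries (by omega) (by omega) ht, add_choose_mul_pow_div_factorial,
    ← hE s1 hs1, ← hE s2 hs2]
  ring

/-- Stuffle identity for Eulerian kernels: with `P_{s-1}` the modified Eulerian
polynomials (`∑_{d≥1} d^{s-1} t^d = P_{s-1}(t)/(1-t)^s`) and `λ₀ = 1`,
`λ_s = B_s/s!` (Bernoulli numbers), for `0 < q < 1`, `n ≥ 1`:
`(n^{r₁-1}P_{s₁-1}(qⁿ)/((s₁-1)!(r₁-1)!(1-qⁿ)^{s₁})) ⬝ (n^{r₂-1}P_{s₂-1}(qⁿ)/((s₂-1)!(r₂-1)!(1-qⁿ)^{s₂}))`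
equals the stated binomial-Bernoulli combination. -/
theorem eulerian_stuffle (P : ℕ → Polynomial ℝ)
    (hP : ∀ s : ℕ, 1 ≤ s → ∀ t : ℝ, |t| < 1 →
      ∑' d : ℕ, ((d + 1 : ℕ) : ℝ) ^ (s - 1) * t ^ (d + 1) = (P (s - 1)).eval t / (1 - t) ^ s)
    (lam : ℕ → ℚ) (hlam0 : lam 0 = 1) (hlam : ∀ s : ℕ, 1 ≤ s → lam s = bernoulli s / (s ! : ℚ))
    (s1 s2 r1 r2 : ℕ) (hs1 : 1 ≤ s1) (hs2 : 1 ≤ s2) (hr1 : 1 ≤ r1) (hr2 : 1 ≤ r2)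
    (q : ℝ) (h0 : 0 < q) (h1 : q < 1) (n : ℕ) (hn : 1 ≤ n) :
    ((n : ℝ) ^ (r1 - 1) * (P (s1 - 1)).eval (q ^ n) /
        (((s1 - 1)! : ℝ) * ((r1 - 1)! : ℝ) * (1 - q ^ n) ^ s1)) *
      ((n : ℝ) ^ (r2 - 1) * (P (s2 - 1)).eval (q ^ n) /
        (((s2 - 1)! : ℝ) * ((r2 - 1)! : ℝ) * (1 - q ^ n) ^ s2)) =
    (Nat.choose (r1 + r2 - 2) (r1 - 1) : ℝ) *
      ((n : ℝ) ^ (r1 + r2 - 2) / ((r1 + r2 - 2)! : ℝ)) *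
      ((P (s1 + s2 - 1)).eval (q ^ n) / (((s1 + s2 - 1)! : ℝ) * (1 - q ^ n) ^ (s1 + s2)) +
        (∑ j ∈ Finset.Icc 1 s1,
          (-1 : ℝ) ^ (s2 - 1) * (Nat.choose (s1 + s2 - j - 1) (s1 - j) : ℝ) *
            ((lam (s1 + s2 - j) : ℝ)) *
            ((P (j - 1)).eval (q ^ n) / (((j - 1)! : ℝ) * (1 - q ^ n) ^ j))) +
        ∑ j ∈ Finset.Icc 1 s2,
          (-1 : ℝ) ^ (s1 - 1) * (Nat.choose (s1 + s2 - j - 1) (s2 - j) : ℝ) *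
            ((lam (s1 + s2 - j) : ℝ)) *
            ((P (j - 1)).eval (q ^ n) / (((j - 1)! : ℝ) * (1 - q ^ n) ^ j))) :=
  eulerian_stuffle_general P hP lam hlam s1 s2 r1 r2 hs1 hs2 hr1 hr2 q h0 h1 n hn
end
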